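/- For every integer k >= 0, the Bernoulli number B_k satisfies B_k = (-1)^{k+1} * k + sum_{j=0}^{k} (-1)^j * j! * S2(k, j) * H_{j+1}, where H_{j+1} is the (j+1)-st harmonic number and S2 denotes Stirling numbers of the second kind. -/

import Mathlib

/-- `S2 n j` is the Stirling number of the second kind. -/
def S2 : ℕ → ℕ → ℕ
  | 0, 0 => 1
  | 0, _ + 1 => 0
  | _ + 1, 0 => 0
  | n + 1, j + 1 => (j + 1) * S2 n (j + 1) + S2 n j

/-- `harm n` is the harmonic number `H_n`. -/
def harm (n : ℕ) : ℚ := ∑ i ∈ Finset.range n, ((i : ℚ) + 1)⁻¹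

lemma S2_eq_zero : ∀ {k j : ℕ}, k < j → S2 k j = 0
  | 0, _ + 1, _ => rfl
  | _ + 1, _ + 1, h => by
    have h' : _ < _ := Nat.lt_of_succ_lt_succ h
    simp [S2, S2_eq_zero h', S2_eq_zero (Nat.lt_of_lt_of_le h' (Nat.le_succ _))]

lemma master (c : ℕ → ℚ) (k : ℕ) :
    ∑ j ∈ Finset.range (k + 2), c j * (S2 (k + 1) j : ℚ)
      = ∑ j ∈ Finset.range (k + 1), (c j * j + c (j + 1)) * (S2 k j : ℚ) := by
  rw [Finset.sum_range_succ']
  have h0 : (S2 (k + 1) 0 : ℚ) = 0 := by norm_num [S2]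
  rw [h0]
  have hrec : ∀ j, (S2 (k + 1) (j + 1) : ℚ) = (j + 1) * S2 k (j + 1) + S2 k j := by
    intro j; push_cast [S2]; ring
  simp only [hrec, mul_add]
  rw [Finset.sum_add_distrib]
  have key : ∑ j ∈ Finset.range (k + 1), c (j + 1) * ((j + 1 : ℚ) * S2 k (j + 1))
      = ∑ j ∈ Finset.range (k + 1), c j * j * (S2 k j : ℚ) := by
    have h1 : ∑ j ∈ Finset.range (k + 2), c j * j * (S2 k j : ℚ)
        = ∑ j ∈ Finset.range (k + 1), c j * j * (S2 k j : ℚ) := by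
      rw [Finset.sum_range_succ, S2_eq_zero (Nat.lt_succ_self k)]
      simp
    have h2 : ∑ j ∈ Finset.range (k + 2), c j * j * (S2 k j : ℚ)
        = ∑ j ∈ Finset.range (k + 1), c (j + 1) * ((j + 1 : ℚ) * S2 k (j + 1)) := by
      rw [Finset.sum_range_succ']
      simp only [Nat.cast_zero, mul_zero, zero_mul, add_zero]
      apply Finset.sum_congr rfl; intro j _; push_cast; ring
    rw [← h2, h1]
  rw [key, mul_zero, add_zero, ← Finset.sum_add_distrib]
  apply Finset.sum_congr rfl; intro j _; ring

lemma harm_succ (n : ℕ) : harm (n + 1) = harm n + ((n : ℚ) + 1)⁻¹ :=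
  Finset.sum_range_succ _ n

lemma lemg (k : ℕ) :
    ∑ j ∈ Finset.range (k + 1), (-1 : ℚ) ^ j * (j.factorial : ℚ) * (S2 k j : ℚ)
      = (-1 : ℚ) ^ k := by
  induction k with
  | zero => simp [S2]
  | succ k ih =>
    have h := master (fun j => (-1 : ℚ) ^ j * (j.factorial : ℚ)) k
    have hterm : ∀ j : ℕ, ((-1 : ℚ) ^ j * (j.factorial : ℚ) * j + (-1 : ℚ) ^ (j+1) * ((j+1).factorial : ℚ))
        = -((-1 : ℚ) ^ j * (j.factorial : ℚ)) := by
      intro j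
      rw [Nat.factorial_succ]
      push_cast
      ring
    calc ∑ j ∈ Finset.range (k + 2), (-1 : ℚ) ^ j * (j.factorial : ℚ) * (S2 (k+1) j : ℚ)
        = ∑ j ∈ Finset.range (k + 1),
            (((fun j => (-1 : ℚ) ^ j * (j.factorial : ℚ)) j) * j
              + ((fun j => (-1 : ℚ) ^ j * (j.factorial : ℚ)) (j+1))) * (S2 k j : ℚ) := h
      _ = ∑ j ∈ Finset.range (k + 1), -((-1 : ℚ) ^ j * (j.factorial : ℚ) * (S2 k j : ℚ)) := by
          apply Finset.sum_congr rfl; intro j _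
          simp only
          rw [hterm j]; ring
      _ = (-1 : ℚ) ^ (k + 1) := by rw [Finset.sum_neg_distrib, ih]; ring

lemma lemf (k : ℕ) :
    ∑ j ∈ Finset.range (k + 1), (-1 : ℚ) ^ j * (j.factorial : ℚ) * (S2 k j : ℚ) * harm j
      = (-1 : ℚ) ^ k * k := by
  induction k with
  | zero => simp [harm]
  | succ k ih =>
    have h := master (fun j => (-1 : ℚ) ^ j * (j.factorial : ℚ) * harm j) k
    have hterm : ∀ j : ℕ,
        ((-1 : ℚ) ^ j * (j.factorial : ℚ) * harm j * j
          + (-1 : ℚ) ^ (j+1) * ((j+1).factorial : ℚ) * harm (j+1))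
        = -((-1 : ℚ) ^ j * (j.factorial : ℚ) * harm j) - (-1 : ℚ) ^ j * (j.factorial : ℚ) := by
      intro j
      rw [harm_succ, Nat.factorial_succ]
      have hj : ((j : ℚ) + 1) ≠ 0 := by positivity
      push_cast
      field_simp
      ring
    calc ∑ j ∈ Finset.range (k + 2), (-1 : ℚ) ^ j * (j.factorial : ℚ) * (S2 (k+1) j : ℚ) * harm j
        = ∑ j ∈ Finset.range (k + 2),
            ((fun j => (-1 : ℚ) ^ j * (j.factorial : ℚ) * harm j) j) * (S2 (k+1) j : ℚ) := by
          apply Finset.sum_congr rfl; intro j _; ring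
      _ = ∑ j ∈ Finset.range (k + 1),
            (((fun j => (-1 : ℚ) ^ j * (j.factorial : ℚ) * harm j) j) * j
              + ((fun j => (-1 : ℚ) ^ j * (j.factorial : ℚ) * harm j) (j+1))) * (S2 k j : ℚ) := h
      _ = ∑ j ∈ Finset.range (k + 1),
            (-((-1 : ℚ) ^ j * (j.factorial : ℚ) * (S2 k j : ℚ) * harm j)
              - (-1 : ℚ) ^ j * (j.factorial : ℚ) * (S2 k j : ℚ)) := by
          apply Finset.sum_congr rfl; intro j _
          rw [hterm j]; ring
      _ = -((-1 : ℚ) ^ k * k) - (-1 : ℚ) ^ k := by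
          rw [Finset.sum_sub_distrib, Finset.sum_neg_distrib, ih, lemg]
      _ = (-1 : ℚ) ^ (k + 1) * (k + 1 : ℕ) := by push_cast; ring

lemma stirling_expand (k : ℕ) (x : ℚ) :
    x ^ k = ∑ j ∈ Finset.range (k + 1), (∏ i ∈ Finset.range j, (x - i)) * (S2 k j : ℚ) := by
  induction k with
  | zero => simp [S2]
  | succ k ih =>
    calc x ^ (k + 1)
        = x * ∑ j ∈ Finset.range (k + 1), (∏ i ∈ Finset.range j, (x - i)) * (S2 k j : ℚ) := by
          rw [← ih]; ring
      _ = ∑ j ∈ Finset.range (k + 1),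
            ((∏ i ∈ Finset.range j, (x - i)) * j
              + (∏ i ∈ Finset.range (j + 1), (x - i))) * (S2 k j : ℚ) := by
          rw [Finset.mul_sum]
          apply Finset.sum_congr rfl; intro j _
          rw [Finset.prod_range_succ]
          ring
      _ = ∑ j ∈ Finset.range (k + 2), (∏ i ∈ Finset.range j, (x - i)) * (S2 (k + 1) j : ℚ) :=
          (master (fun j => ∏ i ∈ Finset.range j, (x - i)) k).symm

lemma sum_pow_eq (k n : ℕ) :
    ∑ i ∈ Finset.range n, (i : ℚ) ^ k
      = ∑ j ∈ Finset.range (k + 1),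
          (∏ i ∈ Finset.range (j + 1), ((n : ℚ) - i)) / (j + 1) * (S2 k j : ℚ) := by
  induction n with
  | zero =>
    rw [Finset.sum_range_zero]
    symm
    apply Finset.sum_eq_zero
    intro j _
    rw [Finset.prod_eq_zero (Finset.mem_range.2 (Nat.succ_pos j))]
    · simp
    · simp
  | succ n ih =>
    rw [Finset.sum_range_succ, ih, stirling_expand k n, ← Finset.sum_add_distrib]
    apply Finset.sum_congr rfl
    intro j _
    have hj : ((j : ℚ) + 1) ≠ 0 := by positivity
    have h1 : ∏ i ∈ Finset.range (j + 1), ((n : ℚ) + 1 - i)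
        = ((n : ℚ) + 1) * ∏ i ∈ Finset.range j, ((n : ℚ) - i) := by
      rw [Finset.prod_range_succ']
      have he : ∀ i ∈ Finset.range j, ((n : ℚ) + 1 - ((i : ℕ) + 1 : ℕ)) = (n : ℚ) - i := by
        intro i _; push_cast; ring
      rw [Finset.prod_congr rfl he]
      push_cast
      ring
    have h2 : ∏ i ∈ Finset.range (j + 1), ((n : ℚ) - i)
        = (∏ i ∈ Finset.range j, ((n : ℚ) - i)) * ((n : ℚ) - j) :=
      Finset.prod_range_succ _ j
    push_cast
    rw [h1, h2]
    field_simp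
    ring

open Polynomial in
lemma coeff_one_prod (j : ℕ) :
    (∏ i ∈ Finset.range (j + 1), (X - C (i : ℚ))).coeff 1 = (-1 : ℚ) ^ j * (j.factorial : ℚ) := by
  rw [Finset.prod_range_succ']
  simp only [Nat.cast_zero, map_zero, sub_zero]
  rw [Polynomial.coeff_mul_X, Polynomial.coeff_zero_eq_eval_zero, Polynomial.eval_prod]
  simp only [Polynomial.eval_sub, Polynomial.eval_X, Polynomial.eval_C, zero_sub]
  have : ∀ i ∈ Finset.range j, (-((i : ℕ) + 1 : ℕ) : ℚ) = (-1) * ((i : ℚ) + 1) := by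
    intro i _; push_cast; ring
  rw [Finset.prod_congr rfl this, Finset.prod_mul_distrib, Finset.prod_const, Finset.card_range]
  congr 1
  have := Finset.prod_range_add_one_eq_factorial j
  calc ∏ i ∈ Finset.range j, ((i : ℚ) + 1) = ((∏ i ∈ Finset.range j, (i + 1) : ℕ) : ℚ) := by
        push_cast; rfl
    _ = (j.factorial : ℚ) := by rw [this]

open Polynomial in
lemma bern_S2 (k : ℕ) :
    (_root_.bernoulli k : ℚ)
      = ∑ j ∈ Finset.range (k + 1), (-1 : ℚ) ^ j * (j.factorial : ℚ) * (S2 k j : ℚ) / (j + 1) := by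
  set P : ℚ[X] := ∑ j ∈ Finset.range (k + 1),
      C ((S2 k j : ℚ) / (j + 1)) * ∏ i ∈ Finset.range (j + 1), (X - C (i : ℚ)) with hPdef
  set Q : ℚ[X] := ∑ i ∈ Finset.range (k + 1),
      C (_root_.bernoulli i * (((k + 1).choose i : ℕ) : ℚ) / ((k : ℚ) + 1)) * X ^ (k + 1 - i) with hQdef
  have hPQ : P = Q := by
    apply Polynomial.eq_of_infinite_eval_eq
    apply Set.infinite_of_injective_forall_mem (f := (Nat.cast : ℕ → ℚ)) Nat.cast_injective
    intro n
    show Polynomial.eval ((n : ℕ) : ℚ) P = Polynomial.eval ((n : ℕ) : ℚ) Q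
    have hP : Polynomial.eval ((n : ℕ) : ℚ) P = ∑ i ∈ Finset.range n, (i : ℚ) ^ k := by
      rw [hPdef, Polynomial.eval_finset_sum, sum_pow_eq k n]
      apply Finset.sum_congr rfl
      intro j _
      rw [Polynomial.eval_mul, Polynomial.eval_C, Polynomial.eval_prod]
      simp only [Polynomial.eval_sub, Polynomial.eval_X, Polynomial.eval_C]
      ring
    have hQ : Polynomial.eval ((n : ℕ) : ℚ) Q = ∑ i ∈ Finset.range n, (i : ℚ) ^ k := by
      rw [hQdef, Polynomial.eval_finset_sum, _root_.sum_range_pow n k]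
      apply Finset.sum_congr rfl
      intro i _
      rw [Polynomial.eval_mul, Polynomial.eval_C, Polynomial.eval_pow, Polynomial.eval_X]
      ring
    rw [hP, hQ]
  have hQ1 : Q.coeff 1 = _root_.bernoulli k := by
    rw [hQdef, Polynomial.finset_sum_coeff]
    rw [Finset.sum_eq_single k]
    · simp only [Polynomial.coeff_C_mul, Polynomial.coeff_X_pow]
      rw [Nat.add_sub_cancel_left, if_pos rfl, Nat.choose_succ_self_right]
      have : ((k : ℚ) + 1) ≠ 0 := by positivity
      push_cast
      field_simp
    · intro i hi hik
      simp only [Polynomial.coeff_C_mul, Polynomial.coeff_X_pow]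
      rw [if_neg, mul_zero]
      have : i < k := lt_of_le_of_ne (Nat.lt_succ_iff.1 (Finset.mem_range.1 hi)) hik
      omega
    · intro h; exact absurd (Finset.self_mem_range_succ k) h
  have hP1 : P.coeff 1
      = ∑ j ∈ Finset.range (k + 1), (-1 : ℚ) ^ j * (j.factorial : ℚ) * (S2 k j : ℚ) / (j + 1) := by
    rw [hPdef, Polynomial.finset_sum_coeff]
    apply Finset.sum_congr rfl
    intro j _
    rw [Polynomial.coeff_C_mul, coeff_one_prod]
    ring
  rw [← hQ1, ← hPQ, hP1]

theorem bernoulli_eq_stirling_harmonic (k : ℕ) :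
    bernoulli k =
      (-1 : ℚ) ^ (k + 1) * k +
        ∑ j ∈ Finset.range (k + 1),
          (-1 : ℚ) ^ j * (j.factorial : ℚ) * (S2 k j : ℚ) * harm (j + 1) := by
  have hsplit : ∀ j ∈ Finset.range (k + 1),
      (-1 : ℚ) ^ j * (j.factorial : ℚ) * (S2 k j : ℚ) * harm (j + 1)
        = (-1 : ℚ) ^ j * (j.factorial : ℚ) * (S2 k j : ℚ) * harm j
            + (-1 : ℚ) ^ j * (j.factorial : ℚ) * (S2 k j : ℚ) / (j + 1) := by
    intro j _
    rw [harm_succ]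
    have hj : ((j : ℚ) + 1) ≠ 0 := by positivity
    field_simp
  rw [Finset.sum_congr rfl hsplit, Finset.sum_add_distrib, lemf, ← bern_S2]
  ring
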